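/- arXiv:1505.06762 — 2 statements merged into one kernel-verified Lean document; each statement's English description precedes it below -/
import Mathlib

section
/- Let A ≤ H be normal subgroups of a group G with A finite and A ≤ Z(H). If G/C_G(H) is locally nilpotent and the image of H/A is contained in the hypercenter Z_∞(G/A) of G/A, then H ≤ Z_∞(G)·A. -/
/-!  Transfinite upper central series, hypercenter, and `A`-central series
for a group `G` with `A ≤ Aut G` normalized by the inner automorphisms. -/

universe u v

open Subgroup

section Preamble

variable {G : Type u} [Group G]

/-- The subgroup `Inn(G) ≤ Aut(G)` of inner automorphisms. -/
def Inn (G : Type u) [Group G] : Subgroup (MulAut G) :=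
  (MulAut.conj : G →* MulAut G).range

/-- `A ≤ Aut(G)` is normalized by the inner automorphisms: `A^{Inn(G)} = A`. -/
def NormalizedByInn (A : Subgroup (MulAut G)) : Prop :=
  ∀ g : G, ∀ γ ∈ A, MulAut.conj g * γ * (MulAut.conj g)⁻¹ ∈ A

theorem normalizedByInn_of_le {A : Subgroup (MulAut G)} (h : Inn G ≤ A) :
    NormalizedByInn A := fun g _γ hγ =>
  mul_mem (mul_mem (h ⟨g, rfl⟩) hγ) (inv_mem (h ⟨g, rfl⟩))

theorem normalizedByInn_of_comm {G : Type u} [CommGroup G] (A : Subgroup (MulAut G)) :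
    NormalizedByInn A := by
  intro g γ hγ
  have h1 : (MulAut.conj : G →* MulAut G) g = 1 := by
    ext x
    simp [MulAut.conj_apply, mul_comm]
  rw [h1]
  simpa using hγ

/-- A supremum of normal subgroups is normal. -/
theorem normal_iSup_of_normal {ι : Sort v} (H : ι → Subgroup G) (h : ∀ i, (H i).Normal) :
    (⨆ i, H i).Normal := by
  constructor
  intro n hn g
  refine Subgroup.iSup_induction H (C := fun x => g * x * g⁻¹ ∈ ⨆ i, H i) hn
    (fun i x hx => le_iSup H i ((h i).conj_mem x hx g)) (by simpa using one_mem _) ?_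
  intro x y hx hy
  have key : g * (x * y) * g⁻¹ = g * x * g⁻¹ * (g * y * g⁻¹) := by group
  rw [key]
  exact mul_mem hx hy

/-- One step of the `A`-central series: given a normal subgroup `Z`, this is the preimage in
`G` of the fixed points `C_{G/Z}(A)` of `A` on `G/Z`, i.e. `{g | ∀ γ ∈ A, g⁻¹ • γ(g) ∈ Z}`. -/
def aStep (A : Subgroup (MulAut G)) (Z : Subgroup G) (hZ : Z.Normal) : Subgroup G where
  carrier := { g : G | ∀ γ ∈ A, g⁻¹ * γ g ∈ Z }
  one_mem' := fun γ _ => by simpa using Z.one_mem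
  mul_mem' := by
    intro a b ha hb γ hγ
    have key : (a * b)⁻¹ * γ (a * b) = b⁻¹ * (a⁻¹ * γ a) * b * (b⁻¹ * γ b) := by
      rw [map_mul]; group
    rw [key]
    refine mul_mem ?_ (hb γ hγ)
    simpa using hZ.conj_mem _ (ha γ hγ) b⁻¹
  inv_mem' := by
    intro a ha γ hγ
    have key : a⁻¹⁻¹ * γ a⁻¹ = a * (a⁻¹ * γ a)⁻¹ * a⁻¹ := by
      rw [map_inv]; group
    rw [key]
    exact hZ.conj_mem _ (inv_mem (ha γ hγ)) a

theorem aStep_normal (A : Subgroup (MulAut G)) (hA : NormalizedByInn A)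
    (Z : Subgroup G) (hZ : Z.Normal) : (aStep A Z hZ).Normal := by
  constructor
  intro n hn g γ hγ
  have hγ' : MulAut.conj g⁻¹ * γ * (MulAut.conj g⁻¹)⁻¹ ∈ A := hA g⁻¹ γ hγ
  have h := hn _ hγ'
  have key : (g * n * g⁻¹)⁻¹ * γ (g * n * g⁻¹) =
      g * (n⁻¹ * (MulAut.conj g⁻¹ * γ * (MulAut.conj g⁻¹)⁻¹) n) * g⁻¹ := by
    have h2 : (MulAut.conj g⁻¹ : MulAut G)⁻¹ = MulAut.conj g := by
      rw [← map_inv, inv_inv]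
    rw [h2]
    simp only [MulAut.mul_apply, MulAut.conj_apply]
    simp only [map_mul, map_inv]
    group
  rw [key]
  exact hZ.conj_mem _ h g

/-- The transfinite `A`-central series of `G` relative to a normal subgroup `L`
(i.e. the preimage in `G` of the `A`-central series of `G/L` for the induced action):
`Z_0 = L`, `Z_{α+1}/Z_α = C_{G/Z_α}(A)`, and unions at limit ordinals;
bundled with normality. -/
noncomputable def aCentralSeriesFromAux (A : Subgroup (MulAut G)) (hA : NormalizedByInn A)
    (L : Subgroup G) (hL : L.Normal) (o : Ordinal.{u}) : { Z : Subgroup G // Z.Normal } :=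
  Ordinal.limitRecOn o ⟨L, hL⟩
    (fun _ Z => ⟨aStep A Z.1 Z.2, aStep_normal A hA Z.1 Z.2⟩)
    (fun o _ ih => ⟨⨆ b : { b : Ordinal.{u} // b < o }, (ih b.1 b.2).1,
      normal_iSup_of_normal _ fun b => (ih b.1 b.2).2⟩)

/-- The `α`-th term `Z_α(G, A; L)` of the `A`-central series of `G` starting at `L`. -/
noncomputable def aCentralSeriesFrom (A : Subgroup (MulAut G)) (hA : NormalizedByInn A)
    (L : Subgroup G) (hL : L.Normal) (o : Ordinal.{u}) : Subgroup G :=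
  (aCentralSeriesFromAux A hA L hL o).1

/-- The `α`-th term `Z_α(G, A)` of the `A`-central series of `G`. -/
noncomputable def aCentralSeries (A : Subgroup (MulAut G)) (hA : NormalizedByInn A)
    (o : Ordinal.{u}) : Subgroup G :=
  aCentralSeriesFrom A hA ⊥ (by infer_instance) o

/-- The `A`-hypercenter `Z_∞(G, A)`: the terminal (stationary) term of the `A`-central
series, realized as the supremum of all its terms. -/
noncomputable def aHypercenter (A : Subgroup (MulAut G)) (hA : NormalizedByInn A) : Subgroup G :=
  ⨆ o : Ordinal.{u}, aCentralSeries A hA o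

/-- `G/L` is `A`-hypercentral (for the induced action of `A` on `G/L`), phrased via the
preimages in `G` of the terms of the `A`-central series of `G/L`. -/
noncomputable def aHypercenterFrom (A : Subgroup (MulAut G)) (hA : NormalizedByInn A)
    (L : Subgroup G) (hL : L.Normal) : Subgroup G :=
  ⨆ o : Ordinal.{u}, aCentralSeriesFrom A hA L hL o

/-- The transfinite upper central series of `G`, bundled with normality:
`Z_0 = 1`, `Z_{α+1}/Z_α = Z(G/Z_α)`, and unions at limit ordinals. -/
noncomputable def ucsOrdAux (G : Type u) [Group G] (o : Ordinal.{u}) :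
    { Z : Subgroup G // Z.Normal } :=
  Ordinal.limitRecOn o ⟨⊥, by infer_instance⟩
    (fun _ Z => by exact ⟨@Subgroup.upperCentralSeriesStep G _ Z.1 Z.2, by letI := Z.2; rw [Subgroup.upperCentralSeriesStep_eq_comap_center]; infer_instance⟩)
    (fun o _ ih => ⟨⨆ b : { b : Ordinal.{u} // b < o }, (ih b.1 b.2).1,
      normal_iSup_of_normal _ fun b => (ih b.1 b.2).2⟩)

/-- The `α`-th term `Z_α(G)` of the transfinite upper central series of `G`. -/
noncomputable def ucsOrd (G : Type u) [Group G] (o : Ordinal.{u}) : Subgroup G :=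
  (ucsOrdAux G o).1

/-- The hypercenter `Z_∞(G)`: the terminal (stationary) term of the transfinite upper
central series, realized as the supremum of all its terms. -/
noncomputable def hypercenter (G : Type u) [Group G] : Subgroup G :=
  ⨆ o : Ordinal.{u}, ucsOrd G o

/-- A group is hypercentral if it coincides with its hypercenter. -/
def IsHypercentral (G : Type u) [Group G] : Prop :=
  hypercenter G = ⊤

/-- A group is locally nilpotent if all its finitely generated subgroups are nilpotent. -/
def LocallyNilpotent (G : Type u) [Group G] : Prop :=
  ∀ H : Subgroup G, H.FG → Group.IsNilpotent H

/-- The inner automorphisms form a normal subgroup of `Aut(G)`. -/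
instance Inn.normal : (Inn G).Normal := by
  constructor
  rintro n ⟨x, rfl⟩ γ
  refine ⟨γ x, ?_⟩
  ext y
  simp [MulAut.conj_apply, MulAut.mul_apply, map_mul, map_inv, mul_assoc]

/-- The centralizer of a normal subgroup is normal. -/
instance centralizer_normal (H : Subgroup G) [hH : H.Normal] :
    (Subgroup.centralizer (H : Set G)).Normal := by
  constructor
  intro n hn g
  intro h hh
  have hh' : g⁻¹ * h * g ∈ H := by simpa using hH.conj_mem h hh g⁻¹
  have hc := hn (g⁻¹ * h * g) hh'
  have key1 : h * (g * n * g⁻¹) = g * (g⁻¹ * h * g * n) * g⁻¹ := by group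
  have key2 : g * n * g⁻¹ * h = g * (n * (g⁻¹ * h * g)) * g⁻¹ := by group
  rw [key1, key2, hc]

end Preamble


/-! By induction on `|A|`. If some normal subgroup `1 < B < A` exists, the induction hypothesis
applied to `G/B` and then to `G`, `B` and the part of `H` lying over `Z_∞(G/B)` gives the claim.
Otherwise `A` is a minimal normal subgroup, and we climb the upper central series of `G/A`; the
step to show is that `x ∈ H` with `⁅x, G⁆ ≤ Z_∞(G)A` lies in `Z_∞(G)A`. In `G/Z_∞(G)`, which has
trivial center, the conjugation action on `A` and on the coset `xA` factors through a finite
nilpotent quotient `N` of `G/C_G(H)`, and the abelian group `A` is a `q`-group. Averaging over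
the `q'`-part `Q` of `N` gives a point `y ∈ xA` fixed by `Q`. As `C_A(Q)` is normal it is `1` or
`A`: in the first case `y` is central, so `y = 1` and `x ∈ A`; in the second the `q`-group `N/Q`
fixes a nontrivial element of the `q`-group `A`, which would be central. -/
open scoped commutatorElement

section UpperCentralSeries

variable {G : Type u} [Group G]

theorem commutatorElement_mem_left {N : Subgroup G} [N.Normal] {x : G} (hx : x ∈ N) (y : G) :
    ⁅x, y⁆ ∈ N :=
  commutator_le_left N ⊤ (commutator_mem_commutator hx (mem_top y))

theorem ucsOrd_normal (o : Ordinal.{u}) : (ucsOrd G o).Normal :=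
  (ucsOrdAux G o).2

instance hypercenter_normal : (hypercenter G).Normal :=
  normal_iSup_of_normal _ ucsOrd_normal

theorem ucsOrd_zero : ucsOrd G 0 = ⊥ := by
  rw [ucsOrd, ucsOrdAux, Ordinal.limitRecOn_zero]

theorem mem_ucsOrd_add_one {o : Ordinal.{u}} {x : G} :
    x ∈ ucsOrd G (o + 1) ↔ ∀ y, ⁅x, y⁆ ∈ ucsOrd G o := by
  rw [ucsOrd, ucsOrdAux, Ordinal.limitRecOn_add_one]
  rfl

theorem ucsOrd_limit {o : Ordinal.{u}} (ho : Order.IsSuccLimit o) :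
    ucsOrd G o = ⨆ b : { b : Ordinal.{u} // b < o }, ucsOrd G b := by
  rw [ucsOrd, ucsOrdAux, Ordinal.limitRecOn_limit _ _ _ _ ho]
  rfl

theorem ucsOrd_le_add_one (o : Ordinal.{u}) : ucsOrd G o ≤ ucsOrd G (o + 1) :=
  have := ucsOrd_normal (G := G) o
  fun _ hx => mem_ucsOrd_add_one.2 (commutatorElement_mem_left hx)

theorem ucsOrd_mono : Monotone (ucsOrd G) := by
  intro a b hab
  induction b using Ordinal.limitRecOn with
  | zero => rw [nonpos_iff_eq_zero.1 hab]
  | add_one b ih =>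
    rcases hab.eq_or_lt with rfl | h
    · exact le_rfl
    · exact (ih (Order.lt_add_one_iff.1 h)).trans (ucsOrd_le_add_one b)
  | limit b hb _ =>
    rcases hab.eq_or_lt with rfl | h
    · exact le_rfl
    · rw [ucsOrd_limit hb]
      exact le_iSup (fun c : { c // c < b } => ucsOrd G c) ⟨a, h⟩

theorem mem_hypercenter {x : G} : x ∈ hypercenter G ↔ ∃ o, x ∈ ucsOrd G o :=
  mem_iSup_of_directed ucsOrd_mono.directed_le

theorem mem_ucsOrd_limit {o : Ordinal.{u}} (ho : Order.IsSuccLimit o) {x : G} :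
    x ∈ ucsOrd G o ↔ ∃ b < o, x ∈ ucsOrd G b := by
  have : Nonempty { b : Ordinal.{u} // b < o } := ⟨⟨0, ho.bot_lt⟩⟩
  rw [ucsOrd_limit ho, mem_iSup_of_directed (K := fun b : { b // b < o } => ucsOrd G b)
    (ucsOrd_mono.comp (Subtype.mono_coe _)).directed_le]
  simp

theorem exists_ucsOrd_add_one_eq : ∃ o : Ordinal.{u}, ucsOrd G (o + 1) = ucsOrd G o := by
  by_contra! h
  refine not_injective_of_ordinal (ucsOrd G) (StrictMono.injective fun a b hab => ?_)
  exact ((ucsOrd_le_add_one a).lt_of_ne (h a).symm).trans_le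
    (ucsOrd_mono (Order.add_one_le_of_lt hab))

theorem hypercenter_eq_ucsOrd {o : Ordinal.{u}} (h : ucsOrd G (o + 1) = ucsOrd G o) :
    hypercenter G = ucsOrd G o := by
  refine le_antisymm (iSup_le fun j => ?_) (le_iSup (ucsOrd G) o)
  induction j using Ordinal.limitRecOn with
  | zero => rw [ucsOrd_zero]; exact bot_le
  | add_one j ih =>
    intro x hx
    rw [← h, mem_ucsOrd_add_one]
    exact fun y => ih (mem_ucsOrd_add_one.1 hx y)
  | limit j hj ih =>
    rw [ucsOrd_limit hj]
    exact iSup_le fun b => ih b b.2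

theorem mem_hypercenter_of_forall_commutator_mem {x : G} (hx : ∀ y, ⁅x, y⁆ ∈ hypercenter G) :
    x ∈ hypercenter G := by
  obtain ⟨o, h⟩ := exists_ucsOrd_add_one_eq (G := G)
  rw [hypercenter_eq_ucsOrd h] at hx ⊢
  exact h ▸ mem_ucsOrd_add_one.2 hx

theorem center_quotient_hypercenter : center (G ⧸ hypercenter G) = ⊥ := by
  refine (eq_bot_iff_forall _).2 fun z hz => ?_
  obtain ⟨x, rfl⟩ := QuotientGroup.mk_surjective z
  rw [QuotientGroup.eq_one_iff]
  refine mem_hypercenter_of_forall_commutator_mem fun y => ?_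
  rw [← QuotientGroup.eq_one_iff, ← QuotientGroup.mk'_apply, map_commutatorElement,
    commutatorElement_eq_one_iff_mul_comm]
  exact (mem_center_iff.1 hz _).symm

theorem le_of_le_hypercenter {H T : Subgroup G} [H.Normal] (hH : H ≤ hypercenter G)
    (hT : ∀ x ∈ H, (∀ y, ⁅x, y⁆ ∈ T) → x ∈ T) : H ≤ T := by
  suffices ∀ o, ∀ x ∈ H, x ∈ ucsOrd G o → x ∈ T by
    intro x hx
    obtain ⟨o, ho⟩ := mem_hypercenter.1 (hH hx)
    exact this o x hx ho
  intro o
  induction o using Ordinal.limitRecOn with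
  | zero =>
    intro x _ hx
    rw [ucsOrd_zero, mem_bot] at hx
    exact hx ▸ one_mem T
  | add_one o ih =>
    exact fun x hxH hx => hT x hxH fun y =>
      ih _ (commutatorElement_mem_left hxH y) (mem_ucsOrd_add_one.1 hx y)
  | limit o ho ih =>
    intro x hxH hx
    obtain ⟨b, hb, hxb⟩ := (mem_ucsOrd_limit ho).1 hx
    exact ih b hb x hxH hxb

theorem map_ucsOrd_le {G' : Type u} [Group G'] {f : G →* G'} (hf : Function.Surjective f)
    (o : Ordinal.{u}) : (ucsOrd G o).map f ≤ ucsOrd G' o := by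
  induction o using Ordinal.limitRecOn with
  | zero => simp [ucsOrd_zero]
  | add_one o ih =>
    rintro _ ⟨x, hx, rfl⟩
    refine mem_ucsOrd_add_one.2 fun y => ?_
    obtain ⟨y, rfl⟩ := hf y
    rw [← map_commutatorElement]
    exact ih (mem_map_of_mem f (mem_ucsOrd_add_one.1 hx y))
  | limit o ho ih =>
    rw [ucsOrd_limit ho, ucsOrd_limit ho, Subgroup.map_iSup]
    exact iSup_mono fun b => ih b b.2

theorem map_hypercenter_le {G' : Type u} [Group G'] {f : G →* G'} (hf : Function.Surjective f) :
    (hypercenter G).map f ≤ hypercenter G' := by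
  rw [hypercenter, hypercenter, Subgroup.map_iSup]
  exact iSup_mono (map_ucsOrd_le hf)

end UpperCentralSeries

section LocallyNilpotent

variable {G G' : Type*} [Group G] [Group G']

theorem LocallyNilpotent.of_surjective (h : LocallyNilpotent G) {f : G →* G'}
    (hf : Function.Surjective f) : LocallyNilpotent G' := by
  rintro _ ⟨s, rfl⟩
  classical
  have hs : (closure (s.image (Function.surjInv hf) : Set G)).map f = closure (s : Set G') := by
    rw [MonoidHom.map_closure, Finset.coe_image, Set.image_image]
    simp [Function.surjInv_eq hf]
  rw [← hs]
  have := h _ ⟨s.image (Function.surjInv hf), rfl⟩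
  exact Group.nilpotent_of_surjective _ (f.subgroupMap_surjective _)

theorem LocallyNilpotent.quotient_map {N : Subgroup G} [N.Normal] {M : Subgroup G'} [M.Normal]
    (h : LocallyNilpotent (G ⧸ N)) {f : G →* G'} (hf : Function.Surjective f)
    (hNM : N ≤ M.comap f) : LocallyNilpotent (G' ⧸ M) :=
  h.of_surjective <|
    QuotientGroup.map_surjective_of_surjective N M f (QuotientGroup.mk_surjective.comp hf) hNM

theorem LocallyNilpotent.isNilpotent [Finite G] (h : LocallyNilpotent G) : Group.IsNilpotent G :=
  have := h ⊤ ((Group.fg_iff_subgroup_fg ⊤).1 inferInstance)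
  Group.nilpotent_of_mulEquiv Subgroup.topEquiv

end LocallyNilpotent

namespace Subgroup

variable {G G' : Type*} [Group G] [Group G'] {A : Subgroup G}

theorem map_centralizer_le_centralizer_map (f : G →* G') (H : Subgroup G) :
    (centralizer H).map f ≤ centralizer (H.map f) := by
  simpa using map_centralizer_le_centralizer_image (H : Set G) f

theorem card_map_lt [Finite A] {f : G →* G'} (hA : A ⊓ f.ker ≠ ⊥) :
    Nat.card (A.map f) < Nat.card A := by
  obtain ⟨⟨a, haA, ha⟩, ha1⟩ := ne_bot_iff_exists_ne_one.1 hA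
  refine (Nat.card_le_card_of_surjective _ (f.subgroupMap_surjective A)).lt_of_ne fun h => ha1 ?_
  have := ((f.subgroupMap_surjective A).bijective_of_nat_card_le h.ge).injective
    (a₁ := ⟨a, haA⟩) (a₂ := 1) (Subtype.ext (by simpa using ha))
  simpa [Subtype.ext_iff] using this

/-- Unlike the usual definition, this includes `A = ⊥`. -/
def IsMinimalNormal (A : Subgroup G) : Prop :=
  ∀ B : Subgroup G, B.Normal → B ≤ A → B = ⊥ ∨ B = A

theorem IsMinimalNormal.map [A.Normal] (hA : A.IsMinimalNormal) (f : G →* G') :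
    (A.map f).IsMinimalNormal := by
  intro B _ hBA
  rcases hA (A ⊓ B.comap f) inferInstance inf_le_left with h | h
  · refine Or.inl ((eq_bot_iff_forall B).2 fun b hb => ?_)
    obtain ⟨a, ha, rfl⟩ := hBA hb
    have : a ∈ A ⊓ B.comap f := ⟨ha, hb⟩
    rw [h, mem_bot] at this
    rw [this, map_one]
  · exact Or.inr (hBA.antisymm (map_le_iff_le_comap.2 (h ▸ inf_le_right)))

theorem IsMinimalNormal.isPGroup [A.Normal] [Finite A] [IsMulCommutative A]
    (hA : A.IsMinimalNormal) {q : ℕ} [Fact q.Prime] (hq : q ∣ Nat.card A) : IsPGroup q A := by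
  let P : Sylow q A := default
  have := P.characteristic_of_normal inferInstance
  rcases hA ((P : Subgroup A).map A.subtype) inferInstance (map_subtype_le _) with h | h
  · exact absurd ((map_eq_bot_iff_of_injective _ A.subtype_injective).1 h) (P.ne_bot_of_dvd_card hq)
  · intro a
    have ha : a ∈ (P : Subgroup A) := by
      simpa using (h.symm ▸ a.2 : (a : G) ∈ (P : Subgroup A).map A.subtype)
    exact (P.isPGroup' ⟨a, ha⟩).imp fun k hk => by simpa [Subtype.ext_iff] using hk

theorem inf_center_ne_bot_of_isPGroup {q : ℕ} [Fact q.Prime] [A.Normal] [Finite A]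
    (hq : q ∣ Nat.card A) {L : Subgroup G} [L.Normal] (hLA : L ≤ centralizer A)
    (hL : IsPGroup q (G ⧸ L)) : A ⊓ center G ≠ ⊥ := by
  let ρ : G ⧸ L →* MulAut A := QuotientGroup.lift L MulAut.conjNormal fun l hl =>
    MulEquiv.ext fun a => Subtype.ext <| by
      simp [MulAut.conjNormal_apply, (mem_centralizer_iff.1 (hLA hl) a a.2).symm]
  let := MulAction.compHom A ρ
  obtain ⟨a, ha, h1a⟩ := hL.exists_fixed_point_of_prime_dvd_card_of_fixed_point A hq
    (a := 1) fun σ => map_one (ρ σ)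
  rw [ne_eq, eq_bot_iff_forall]
  push Not
  refine ⟨a, ⟨a.2, mem_center_iff.2 fun g => ?_⟩, fun h => h1a (Subtype.ext h.symm)⟩
  have := congrArg Subtype.val (ha (g : G ⧸ L))
  change g * a * g⁻¹ = a at this
  exact mul_inv_eq_iff_eq_mul.1 this

end Subgroup

theorem IsPGroup.quotient_comap {G N : Type*} [Group G] [Group N] {p : ℕ} {Q : Subgroup N}
    [Q.Normal] (hQ : IsPGroup p (N ⧸ Q)) (f : G →* N) : IsPGroup p (G ⧸ Q.comap f) := by
  intro σ
  obtain ⟨g, rfl⟩ := QuotientGroup.mk_surjective σ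
  refine (hQ (f g)).imp fun k hk => ?_
  rwa [← QuotientGroup.mk_pow, QuotientGroup.eq_one_iff, mem_comap, map_pow,
    ← QuotientGroup.eq_one_iff, QuotientGroup.mk_pow]

theorem Group.IsNilpotent.exists_normal_isPGroup_quotient {N : Type*} [Group N] [Finite N]
    [Group.IsNilpotent N] (q : ℕ) [hq : Fact q.Prime] :
    ∃ (Q : Subgroup N) (_ : Q.Normal), ¬ q ∣ Nat.card Q ∧ IsPGroup q (N ⧸ Q) := by
  classical
  by_cases hqN : q ∣ Nat.card N
  swap
  · exact ⟨⊤, inferInstance, by rwa [card_top],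
      have := QuotientGroup.subsingleton_quotient_top (G := N); IsPGroup.of_subsingleton _ _⟩
  -- `Q` is the kernel of the projection of `N ≅ ∏ₚ Sylow p N` onto its Sylow `q`-factor.
  obtain ⟨e⟩ := (Group.isNilpotent_of_finite_tfae.out 0 4).1 ‹_›
  let P : Sylow q N := default
  let i : (Nat.card N).primeFactors := ⟨q, Nat.mem_primeFactors.2 ⟨hq.out, hqN, Nat.card_pos.ne'⟩⟩
  let π : N →* P := ((Pi.evalMonoidHom (fun P : Sylow q N => (P : Subgroup N)) P).comp
    (Pi.evalMonoidHom (fun p : (Nat.card N).primeFactors => ∀ P : Sylow p N, P) i)).comp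
    e.symm.toMonoidHom
  have hπ : Function.Surjective π := fun y =>
    ⟨e (Pi.mulSingle i (Pi.mulSingle P y)), by simp [π]⟩
  refine ⟨π.ker, inferInstance, ?_,
    P.isPGroup'.of_equiv (QuotientGroup.quotientKerEquivOfSurjective π hπ).symm⟩
  have hker : Nat.card π.ker = (P : Subgroup N).index := by
    apply Nat.eq_of_mul_eq_mul_right (Nat.card_pos (α := P))
    rw [mul_comm (P : Subgroup N).index, (P : Subgroup N).card_mul_index, ← card_top (G := P),
      ← π.range_eq_top.2 hπ, ← index_ker, card_mul_index]
  rw [hker]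
  exact P.not_dvd_index

-- Vanishing of `H¹` for coprime actions: `b` is the `|Γ|`-th root of `∏ h, c h`.
theorem exists_eq_mul_inv_of_coprime {Γ M : Type*} [Group Γ] [Finite Γ] [CommGroup M]
    (hcop : (Nat.card M).Coprime (Nat.card Γ)) (ψ : Γ →* MulAut M) (c : Γ → M)
    (hc : ∀ g h, c (g * h) = c g * ψ g (c h)) : ∃ b, ∀ g, c g = b * (ψ g b)⁻¹ := by
  have := Fintype.ofFinite Γ
  have hs : ∀ g, c g ^ Nat.card Γ * ψ g (∏ h, c h) = ∏ h, c h := fun g => calc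
    _ = ∏ h, c (g * h) := by
      simp only [hc, Finset.prod_mul_distrib, Finset.prod_const, Finset.card_univ,
        Nat.card_eq_fintype_card, map_prod]
    _ = ∏ h, c h := Fintype.prod_equiv (Equiv.mulLeft g) _ _ fun _ => rfl
  obtain ⟨b, hb⟩ := (powCoprime hcop).surjective (∏ h, c h)
  refine ⟨b, fun g => (powCoprime hcop).injective ?_⟩
  simp only [powCoprime_apply] at hb ⊢
  rw [mul_pow, inv_pow, ← map_pow, hb, eq_mul_inv_iff_mul_eq, hs]

section CommutatorHom

variable {G : Type*} [Group G] {A : Subgroup G} [A.Normal] {x : G}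

-- The conjugation action of `G` on `A` and on the coset `x A`, recorded in `A ⋊ Aut A`.
def commutatorHom (hx : x ∈ A.upperCentralSeriesStep) :
    G →* A ⋊[MonoidHom.id (MulAut A)] MulAut A where
  toFun g := ⟨⟨⁅x, g⁆, (Subgroup.mem_upperCentralSeriesStep A x).1 hx g⟩, MulAut.conjNormal g⟩
  map_one' := SemidirectProduct.ext (Subtype.ext (commutatorElement_one_right x)) (map_one _)
  map_mul' g h := SemidirectProduct.ext (Subtype.ext (by simp [commutatorElement_def]; group))
    (map_mul _ g h)

theorem centralizer_inf_le_ker_commutatorHom (hx : x ∈ A.upperCentralSeriesStep) :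
    centralizer {x} ⊓ centralizer A ≤ (commutatorHom hx).ker := by
  rintro g ⟨hgx, hgA⟩
  refine SemidirectProduct.ext (Subtype.ext ?_) (MulEquiv.ext fun a => Subtype.ext ?_)
  · exact commutatorElement_eq_one_iff_mul_comm.2 (mem_centralizer_singleton_iff.1 hgx).symm
  · simp [commutatorHom, MulAut.conjNormal_apply, (mem_centralizer_iff.1 hgA a a.2).symm]

open scoped IsMulCommutative in
theorem exists_mul_mem_centralizer_of_isPGroup [Finite A] [IsMulCommutative A] {q : ℕ}
    [hq : Fact q.Prime] (hAq : IsPGroup q A) (hx : x ∈ A.upperCentralSeriesStep)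
    {L : Subgroup G} [L.Normal] (hLx : L ≤ centralizer {x}) (hLA : L ≤ centralizer A)
    (hL : LocallyNilpotent (G ⧸ L)) :
    ∃ (M : Subgroup G) (_ : M.Normal), IsPGroup q (G ⧸ M) ∧ ∃ a ∈ A, a * x ∈ centralizer M := by
  -- `M` is the preimage of the `q'`-part of the finite nilpotent group `Φ.range`.
  set Φ := commutatorHom hx
  have : Finite (A ⋊[MonoidHom.id (MulAut A)] MulAut A) :=
    Finite.of_equiv _ SemidirectProduct.equivProd.symm
  have : Group.IsNilpotent Φ.range :=
    (hL.of_surjective (QuotientGroup.lift_surjective_of_surjective L Φ.rangeRestrict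
      Φ.rangeRestrict_surjective ((le_inf hLx hLA).trans
        (by simpa using centralizer_inf_le_ker_commutatorHom hx)))).isNilpotent
  obtain ⟨Q, _, hQq, hQ⟩ := Group.IsNilpotent.exists_normal_isPGroup_quotient (N := Φ.range) q
  obtain ⟨n, hn⟩ := IsPGroup.iff_card.1 hAq
  obtain ⟨b, hb⟩ := exists_eq_mul_inv_of_coprime (Γ := Q)
    (hn ▸ Nat.Coprime.pow_left n ((Nat.Prime.coprime_iff_not_dvd hq.out).2 hQq))
    (SemidirectProduct.rightHom.comp (Φ.range.subtype.comp Q.subtype))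
    (fun σ => (σ : Φ.range).1.left) fun _ _ => SemidirectProduct.mul_left _ _
  refine ⟨Q.comap Φ.rangeRestrict, inferInstance, hQ.quotient_comap _, b⁻¹, inv_mem b.2,
    mem_centralizer_iff.2 fun g hg => ?_⟩
  have h : ⁅x, g⁆ = b * (g * b * g⁻¹)⁻¹ := congrArg Subtype.val (hb ⟨Φ.rangeRestrict g, hg⟩)
  rw [show (b : G)⁻¹ * x * g = (b : G)⁻¹ * ⁅x, g⁆ * g * x by rw [commutatorElement_def]; group, h]
  group

theorem Subgroup.IsMinimalNormal.mem_of_mem_upperCentralSeriesStep (hG : center G = ⊥)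
    [Finite A] [IsMulCommutative A] (hA : A.IsMinimalNormal) (hx : x ∈ A.upperCentralSeriesStep)
    {L : Subgroup G} [L.Normal] (hLx : L ≤ centralizer {x}) (hLA : L ≤ centralizer A)
    (hL : LocallyNilpotent (G ⧸ L)) : x ∈ A := by
  rcases eq_or_ne A ⊥ with rfl | hA0
  · rw [← hG, mem_center_iff]
    exact fun g => (commutatorElement_eq_one_iff_mul_comm.1
      (mem_bot.1 ((Subgroup.mem_upperCentralSeriesStep _ x).1 hx g))).symm
  have : Fact (Nat.card A).minFac.Prime :=
    ⟨Nat.minFac_prime ((one_lt_card_iff_ne_bot A).2 hA0).ne'⟩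
  have hqA : (Nat.card A).minFac ∣ Nat.card A := Nat.minFac_dvd _
  obtain ⟨M, _, hM, a, ha, hax⟩ :=
    exists_mul_mem_centralizer_of_isPGroup (hA.isPGroup hqA) hx hLx hLA hL
  -- `A ⊓ C(M)` is `⊥`, and then `a * x` is central, or `A`, and then `A` meets the center.
  rcases hA (A ⊓ centralizer M) inferInstance inf_le_left with hD | hD
  · have hy : a * x ∈ A.upperCentralSeriesStep :=
      mul_mem ((Subgroup.mem_upperCentralSeriesStep _ a).2 (commutatorElement_mem_left ha)) hx
    have : a * x ∈ center G := mem_center_iff.2 fun g => by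
      have : ⁅a * x, g⁆ ∈ A ⊓ centralizer M :=
        ⟨(Subgroup.mem_upperCentralSeriesStep _ _).1 hy g, commutatorElement_mem_left hax g⟩
      rw [hD, mem_bot, commutatorElement_eq_one_iff_mul_comm] at this
      exact this.symm
    rw [hG, mem_bot] at this
    simpa [eq_inv_of_mul_eq_one_right this] using inv_mem ha
  · have hMA : M ≤ centralizer A := le_centralizer_iff.1 (hD ▸ inf_le_right)
    exact absurd (by rw [hG, inf_bot_eq]) (inf_center_ne_bot_of_isPGroup hqA hMA hM)

end CommutatorHom

section MainArgument

variable {G : Type u} [Group G] {A H : Subgroup G} [A.Normal]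

theorem mem_hypercenter_sup_of_forall_commutator_mem [H.Normal] [Finite A] (hAH : A ≤ H)
    (hAZ : A ≤ centralizer H) (hln : LocallyNilpotent (G ⧸ centralizer H))
    (hA : A.IsMinimalNormal) {x : G} (hxH : x ∈ H) (hx : ∀ g, ⁅x, g⁆ ∈ hypercenter G ⊔ A) :
    x ∈ hypercenter G ⊔ A := by
  set π := QuotientGroup.mk' (hypercenter G)
  have hπ : Function.Surjective π := QuotientGroup.mk'_surjective _
  have hZA : hypercenter G ⊔ A = (A.map π).comap π := by
    rw [comap_map_eq, QuotientGroup.ker_mk', sup_comm]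
  have : (A.map π).Normal := .map ‹_› π hπ
  have : ((centralizer H).map π).Normal := .map inferInstance π hπ
  have : IsMulCommutative A :=
    le_centralizer_iff_isMulCommutative.1 (hAZ.trans (centralizer_le hAH))
  have : Finite (A.map π) := Finite.of_surjective _ (π.subgroupMap_surjective A)
  have hCx : centralizer H ≤ centralizer {x} := centralizer_le (by simpa using hxH)
  rw [hZA, mem_comap]
  have hL : LocallyNilpotent ((G ⧸ hypercenter G) ⧸ (centralizer H).map π) :=
    hln.quotient_map hπ (le_comap_map _ _)
  refine (hA.map π).mem_of_mem_upperCentralSeriesStep center_quotient_hypercenter ?_ ?_ ?_ hL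
  · refine (Subgroup.mem_upperCentralSeriesStep _ _).2 fun y => ?_
    obtain ⟨g, rfl⟩ := hπ y
    rw [← map_commutatorElement, ← mem_comap, ← hZA]
    exact hx g
  · simpa using (map_mono hCx).trans (map_centralizer_le_centralizer_image _ π)
  · exact (map_mono (centralizer_le hAH)).trans (map_centralizer_le_centralizer_map π A)

theorem le_hypercenter_sup_of_isMinimalNormal [H.Normal] [Finite A] (hAH : A ≤ H)
    (hAZ : A ≤ centralizer H) (hln : LocallyNilpotent (G ⧸ centralizer H))
    (hhyp : H.map (QuotientGroup.mk' A) ≤ hypercenter (G ⧸ A)) (hA : A.IsMinimalNormal) :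
    H ≤ hypercenter G ⊔ A := by
  set π := QuotientGroup.mk' A
  have hT : hypercenter G ⊔ A = ((hypercenter G ⊔ A).map π).comap π := by
    rw [comap_map_eq, QuotientGroup.ker_mk', sup_of_le_left le_sup_right]
  have : (H.map π).Normal := .map ‹_› π (QuotientGroup.mk'_surjective _)
  rw [hT, ← map_le_iff_le_comap]
  refine le_of_le_hypercenter hhyp fun y hy hcomm => ?_
  obtain ⟨x, hxH, rfl⟩ := hy
  rw [← mem_comap, ← hT]
  refine mem_hypercenter_sup_of_forall_commutator_mem hAH hAZ hln hA hxH fun g => ?_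
  rw [hT, mem_comap, map_commutatorElement]
  exact hcomm (π g)

theorem map_map_le_hypercenter {B : Subgroup G} [B.Normal] (hBA : B ≤ A)
    (hhyp : H.map (QuotientGroup.mk' A) ≤ hypercenter (G ⧸ A)) :
    (H.map (QuotientGroup.mk' B)).map (QuotientGroup.mk' (A.map (QuotientGroup.mk' B))) ≤
      hypercenter ((G ⧸ B) ⧸ A.map (QuotientGroup.mk' B)) := by
  rintro _ ⟨_, ⟨h, hh, rfl⟩, rfl⟩
  let e := QuotientGroup.quotientQuotientEquivQuotient B A hBA
  refine map_hypercenter_le e.symm.surjective ⟨e _, hhyp ⟨h, hh, ?_⟩, e.symm_apply_apply _⟩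
  exact (QuotientGroup.quotientQuotientEquivQuotientAux_mk_mk B A hBA h).symm

theorem le_hypercenter_sup_of_le_quotient {B : Subgroup G} [B.Normal] (hBA : B ≤ A)
    (hAH : A ≤ H)
    (h₁ : H.map (QuotientGroup.mk' B) ≤ hypercenter (G ⧸ B) ⊔ A.map (QuotientGroup.mk' B))
    (h₂ : (hypercenter (G ⧸ B)).comap (QuotientGroup.mk' B) ⊓ H ≤ hypercenter G ⊔ B) :
    H ≤ hypercenter G ⊔ A := by
  intro h hh
  have : (A.map (QuotientGroup.mk' B)).Normal := .map ‹_› _ (QuotientGroup.mk'_surjective _)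
  obtain ⟨z, hz, _, ⟨a, ha, rfl⟩, hza⟩ := mem_sup_of_normal_right.1 (h₁ (mem_map_of_mem _ hh))
  have : h * a⁻¹ ∈ hypercenter G ⊔ B := by
    refine h₂ (mem_inf.2 ⟨?_, mul_mem hh (inv_mem (hAH ha))⟩)
    rwa [mem_comap, map_mul, map_inv, ← hza, mul_inv_cancel_right]
  simpa using mul_mem (sup_le_sup_left hBA _ this) (mem_sup_right ha)

theorem le_hypercenter_sup_of_central [H.Normal] [Finite A] (hAH : A ≤ H)
    (hAZ : A ≤ centralizer H) (hln : LocallyNilpotent (G ⧸ centralizer H))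
    (hhyp : H.map (QuotientGroup.mk' A) ≤ hypercenter (G ⧸ A)) : H ≤ hypercenter G ⊔ A := by
  induction hn : Nat.card A using Nat.strong_induction_on generalizing G with
  | _ n ih =>
    by_cases hA : A.IsMinimalNormal
    · exact le_hypercenter_sup_of_isMinimalNormal hAH hAZ hln hhyp hA
    obtain ⟨B, _, hBA, hB, hBA'⟩ : ∃ B : Subgroup G, B.Normal ∧ B ≤ A ∧ B ≠ ⊥ ∧ B ≠ A := by
      simpa [IsMinimalNormal, not_or] using hA
    have : Finite B := Finite.of_injective _ (inclusion_injective hBA)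
    set π := QuotientGroup.mk' B
    have hπ : Function.Surjective π := QuotientGroup.mk'_surjective B
    have : (A.map π).Normal := .map ‹_› π hπ
    have : (H.map π).Normal := .map ‹_› π hπ
    have : Finite (A.map π) := Finite.of_surjective _ (π.subgroupMap_surjective A)
    have h₁ := ih _ (hn ▸ card_map_lt (by rwa [QuotientGroup.ker_mk', inf_of_le_right hBA]))
      (map_mono hAH) ((map_mono hAZ).trans (map_centralizer_le_centralizer_map π H))
      (hln.quotient_map hπ (map_le_iff_le_comap.1 (map_centralizer_le_centralizer_map π H)))
      (map_map_le_hypercenter hBA hhyp) rfl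
    have hBn : Nat.card B < n :=
      hn ▸ (card_le_of_le hBA).lt_of_ne fun h => hBA' (eq_of_le_of_card_ge hBA h.ge)
    have h₂ := ih _ hBn (H := (hypercenter (G ⧸ B)).comap π ⊓ H)
      (le_inf (by simpa [π] using ker_le_comap π (hypercenter (G ⧸ B))) (hBA.trans hAH))
      (hBA.trans (hAZ.trans (centralizer_le inf_le_right)))
      (hln.quotient_map (f := MonoidHom.id G) Function.surjective_id
        (centralizer_le inf_le_right))
      (map_le_iff_le_comap.2 inf_le_left) rfl
    exact le_hypercenter_sup_of_le_quotient hBA hAH h₁ h₂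

end MainArgument

open Pointwise in
/-- **Key Lemma.** Let `A ≤ H` be normal subgroups of a group `G` with `A` finite and
`A ≤ Z(H)`. If `G/C_G(H)` is locally nilpotent and the image of `H` in `G/A` is contained
in the hypercenter `Z_∞(G/A)`, then `H ≤ Z_∞(G)·A`. -/
theorem le_hypercenter_mul_of_central
    (G : Type u) [Group G] (A H : Subgroup G) [A.Normal] [H.Normal] [Finite A]
    (hAH : A ≤ H) (hAZ : A ≤ Subgroup.centralizer (H : Set G))
    (hln : LocallyNilpotent (G ⧸ Subgroup.centralizer (H : Set G)))
    (hhyp : H.map (QuotientGroup.mk' A) ≤ hypercenter (G ⧸ A)) :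
    (H : Set G) ⊆ (hypercenter G : Set G) * (A : Set G) := by
  rw [← mul_normal]
  exact le_hypercenter_sup_of_central hAH hAZ hln hhyp
end

section
/- Let p be an odd prime, let G = ⨁_{i<ω} ⟨a_i⟩ be an elementary abelian p-group with basis (a_i)_{i<ω}, and let Z = ⨁_{0<i<ω} ⟨a_i⟩. For each i > 0 let γ_i ∈ Aut(G) be the automorphism fixing Z pointwise with a_0^{γ_i} = a_0 a_i, and let τ ∈ Aut(G) fix Z pointwise with a_0^τ = a_0^2. Let A = ⟨τ, γ_i (i > 0)⟩ ≤ Aut(G). Then Z = Z_1(G,A) = Z_∞(G,A) has index p in G, while for every proper A-invariant subgroup K of G (in particular for every finite A-invariant subgroup L of G), the quotient G/K is not A-hypercentral. -/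
/-!  Transfinite upper central series, hypercenter, and `A`-central series
for a group `G` with `A ≤ Aut G` normalized by the inner automorphisms. -/

universe u v

open Subgroup

/-! Every element of `A` fixes `Z = ker (g ↦ g₀)` pointwise, so `Z` lies in every step of the
`A`-central series.  Conversely `g⁻¹ τ(g) = a₀ ^ g₀`, which lies outside `Z` unless `g ∈ Z`, so no
term of the series started inside `Z` ever leaves `Z`.  A proper `A`-invariant `K` lies in `Z`:
if `g ∈ K` had `g₀ ≠ 0`, then `K` would contain `a_i ^ g₀` for every `i` (apply `τ` or `γ_i`),
hence every `a_i`, hence all of `G`. -/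

section ACentralSeries

variable {G : Type u} [Group G] (A : Subgroup (MulAut G)) (hA : NormalizedByInn A)

theorem aCentralSeriesFrom_zero (L : Subgroup G) (hL : L.Normal) :
    aCentralSeriesFrom A hA L hL 0 = L := by
  rw [aCentralSeriesFrom, aCentralSeriesFromAux, Ordinal.limitRecOn_zero]

theorem aCentralSeriesFrom_add_one (L : Subgroup G) (hL : L.Normal) (o : Ordinal.{u}) :
    aCentralSeriesFrom A hA L hL (o + 1) =
      aStep A (aCentralSeriesFrom A hA L hL o) (aCentralSeriesFromAux A hA L hL o).2 := by
  rw [aCentralSeriesFrom, aCentralSeriesFromAux, Ordinal.limitRecOn_add_one]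
  rfl

theorem aCentralSeriesFrom_limit (L : Subgroup G) (hL : L.Normal) {o : Ordinal.{u}}
    (ho : Order.IsSuccLimit o) :
    aCentralSeriesFrom A hA L hL o =
      ⨆ b : { b : Ordinal.{u} // b < o }, aCentralSeriesFrom A hA L hL b.1 := by
  rw [aCentralSeriesFrom, aCentralSeriesFromAux, Ordinal.limitRecOn_limit _ _ _ _ ho]
  rfl

theorem aCentralSeries_one : aCentralSeries A hA 1 = aStep A ⊥ inferInstance := by
  rw [aCentralSeries, ← zero_add (1 : Ordinal), aCentralSeriesFrom_add_one]
  congr 1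
  exact aCentralSeriesFrom_zero A hA ⊥ _

theorem le_aStep_of_forall_fix {H : Subgroup G} (hH : ∀ γ ∈ A, ∀ h ∈ H, γ h = h)
    (K : Subgroup G) (hK : K.Normal) : H ≤ aStep A K hK := by
  intro h hh γ hγ
  rw [hH γ hγ h hh, inv_mul_cancel]
  exact K.one_mem

variable {A} {τ : MulAut G} {H : Subgroup G}

theorem aStep_le (hτ : τ ∈ A) (hτH : ∀ g, g⁻¹ * τ g ∈ H → g ∈ H) {K : Subgroup G}
    (hK : K.Normal) (hKH : K ≤ H) : aStep A K hK ≤ H :=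
  fun g hg => hτH g (hKH (hg τ hτ))

theorem aCentralSeriesFrom_le (hτ : τ ∈ A) (hτH : ∀ g, g⁻¹ * τ g ∈ H → g ∈ H)
    {L : Subgroup G} (hL : L.Normal) (hLH : L ≤ H) (o : Ordinal.{u}) :
    aCentralSeriesFrom A hA L hL o ≤ H := by
  induction o using Ordinal.limitRecOn with
  | zero => rwa [aCentralSeriesFrom_zero]
  | add_one o ih => rw [aCentralSeriesFrom_add_one]; exact aStep_le hτ hτH _ ih
  | limit o ho ih =>
    rw [aCentralSeriesFrom_limit A hA L hL ho]
    exact iSup_le fun b => ih b.1 b.2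

theorem aHypercenterFrom_le (hτ : τ ∈ A) (hτH : ∀ g, g⁻¹ * τ g ∈ H → g ∈ H)
    {L : Subgroup G} (hL : L.Normal) (hLH : L ≤ H) : aHypercenterFrom A hA L hL ≤ H :=
  iSup_le (aCentralSeriesFrom_le hA hτ hτH hL hLH)

theorem aHypercenterFrom_ne_top (hτ : τ ∈ A) (hτH : ∀ g, g⁻¹ * τ g ∈ H → g ∈ H) (hH : H ≠ ⊤)
    {L : Subgroup G} (hL : L.Normal) (hLH : L ≤ H) : aHypercenterFrom A hA L hL ≠ ⊤ :=
  fun htop => hH (top_le_iff.1 (htop ▸ aHypercenterFrom_le hA hτ hτH hL hLH))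

end ACentralSeries

theorem forall_mem_closure_fix {G : Type*} [Group G] {S : Set (MulAut G)} {H : Set G}
    (hS : ∀ φ ∈ S, ∀ h ∈ H, φ h = h) : ∀ φ ∈ Subgroup.closure S, ∀ h ∈ H, φ h = h := by
  have hle : Subgroup.closure S ≤ fixingSubgroup (MulAut G) H :=
    (Subgroup.closure_le _).2 fun φ hφ => (mem_fixingSubgroup_iff _).2 (hS φ hφ)
  exact fun φ hφ => (mem_fixingSubgroup_iff _).1 (hle hφ)

theorem Subgroup.ne_top_of_finite {G : Type*} [Group G] [Infinite G] (L : Subgroup G)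
    [Finite L] : L ≠ ⊤ := by
  rintro rfl
  exact not_finite_iff_infinite.2 ‹_› (Finite.of_equiv _ Subgroup.topEquiv.toEquiv)

theorem mem_of_pow_val_mem {G : Type*} [Group G] {p : ℕ} [Fact p.Prime] {K : Subgroup G}
    {x : G} (hx : x ^ p = 1) {c : ZMod p} (hc : c ≠ 0) (h : x ^ c.val ∈ K) : x ∈ K := by
  have hmod : c.val * c⁻¹.val ≡ 1 [MOD orderOf x] := by
    refine Nat.ModEq.of_dvd (orderOf_dvd_of_pow_eq_one hx) ?_
    rw [← ZMod.natCast_eq_natCast_iff]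
    push_cast
    rw [ZMod.natCast_val, ZMod.natCast_val, ZMod.cast_id, ZMod.cast_id, mul_inv_cancel₀ hc]
  have hx1 : (x ^ c.val) ^ c⁻¹.val = x := by
    rw [← pow_mul, pow_eq_pow_iff_modEq.2 hmod, pow_one]
  exact hx1 ▸ pow_mem h _

section ElementaryAbelian

open Multiplicative Finsupp

local notation "𝔾" p:max => Multiplicative (ℕ →₀ ZMod p)

variable {p : ℕ}

noncomputable def basisGen (p i : ℕ) : 𝔾 p :=
  ofAdd (single i 1)

noncomputable def evalZero (p : ℕ) : 𝔾 p →* Multiplicative (ZMod p) :=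
  AddMonoidHom.toMultiplicative (applyAddHom 0)

theorem mem_ker_evalZero {g : 𝔾 p} : g ∈ (evalZero p).ker ↔ toAdd g 0 = 0 :=
  MonoidHom.mem_ker.trans ofAdd_eq_one

theorem index_ker_evalZero [NeZero p] : (evalZero p).ker.index = p := by
  have hsurj : Function.Surjective (evalZero p) := fun c =>
    ⟨ofAdd (single 0 (toAdd c)), by simp [evalZero]⟩
  rw [Subgroup.index_ker, MonoidHom.range_eq_top.2 hsurj, Subgroup.card_top,
    Nat.card_congr toAdd, Nat.card_zmod]

theorem toAdd_basisGen_pow (i n : ℕ) : toAdd (basisGen p i ^ n) = single i (n : ZMod p) := by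
  rw [basisGen, toAdd_pow, toAdd_ofAdd, smul_single, nsmul_eq_mul, mul_one]

theorem basisGen_pow_char (i : ℕ) : basisGen p i ^ p = 1 := by
  rw [← toAdd_eq_zero, toAdd_basisGen_pow, ZMod.natCast_self, single_zero]

theorem toAdd_basisGen_pow_val [NeZero p] (i : ℕ) (c : ZMod p) :
    toAdd (basisGen p i ^ c.val) = single i c := by
  rw [toAdd_basisGen_pow, ZMod.natCast_zmod_val]

theorem eq_top_of_forall_basisGen_mem [NeZero p] {K : Subgroup (𝔾 p)}
    (h : ∀ i, basisGen p i ∈ K) : K = ⊤ := by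
  refine eq_top_iff.2 fun g _ => ?_
  rw [← ofAdd_toAdd g]
  induction toAdd g using Finsupp.induction with
  | zero => exact K.one_mem
  | single_add i c f _ _ ih =>
    rw [ofAdd_add, ← toAdd_basisGen_pow_val i c, ofAdd_toAdd]
    exact mul_mem (pow_mem (h i) _) ih

theorem eq_mul_pow_of_forall_ker_fix {F : Type*} [FunLike F (𝔾 p) (𝔾 p)]
    [MonoidHomClass F (𝔾 p) (𝔾 p)] [NeZero p] (φ : F) (hφ : ∀ z ∈ (evalZero p).ker, φ z = z)
    {w : 𝔾 p} (hw : φ (basisGen p 0) = basisGen p 0 * w) (g : 𝔾 p) :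
    φ g = g * w ^ (toAdd g 0).val := by
  set n := (toAdd g 0).val
  set z := (basisGen p 0 ^ n)⁻¹ * g
  have hz : z ∈ (evalZero p).ker := by
    rw [mem_ker_evalZero, toAdd_mul, toAdd_inv, toAdd_basisGen_pow_val]
    simp
  calc φ g = φ (basisGen p 0 ^ n * z) := by rw [mul_inv_cancel_left]
    _ = (basisGen p 0 * w) ^ n * z := by rw [map_mul, map_pow, hw, hφ z hz]
    _ = g * w ^ n := by rw [mul_pow, mul_right_comm, mul_inv_cancel_left]

theorem mem_ker_evalZero_of_inv_mul_mem [NeZero p] {τ : 𝔾 p → 𝔾 p}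
    (hτ : ∀ g, τ g = g * basisGen p 0 ^ (toAdd g 0).val) (g : 𝔾 p)
    (hg : g⁻¹ * τ g ∈ (evalZero p).ker) : g ∈ (evalZero p).ker := by
  rwa [hτ, inv_mul_cancel_left, mem_ker_evalZero, toAdd_basisGen_pow_val, single_eq_same,
    ← mem_ker_evalZero] at hg

theorem le_ker_evalZero_of_invariant [Fact p.Prime] {A : Subgroup (MulAut (𝔾 p))}
    (hshift : ∀ i, ∃ φ ∈ A, ∀ g, φ g = g * basisGen p i ^ (toAdd g 0).val)
    {K : Subgroup (𝔾 p)} (hK : ∀ φ ∈ A, ∀ x ∈ K, φ x ∈ K) (hne : K ≠ ⊤) :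
    K ≤ (evalZero p).ker := by
  refine fun g hg => by_contra fun hg0 => hne (eq_top_of_forall_basisGen_mem fun i => ?_)
  obtain ⟨φ, hφA, hφ⟩ := hshift i
  have hmem : g⁻¹ * φ g ∈ K := mul_mem (inv_mem hg) (hK φ hφA g hg)
  rw [hφ, inv_mul_cancel_left] at hmem
  exact mem_of_pow_val_mem (basisGen_pow_char i) (mt mem_ker_evalZero.2 hg0) hmem

end ElementaryAbelian

theorem example_proper_invariant_quotient_not_hypercentral_general
    (p : ℕ) (hp : p.Prime) :
    ∀ (a : ℕ → Multiplicative (ℕ →₀ ZMod p)),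
      (∀ i, a i = Multiplicative.ofAdd (Finsupp.single i 1)) →
      ∀ Z : Subgroup (Multiplicative (ℕ →₀ ZMod p)),
        (∀ g, g ∈ Z ↔ Multiplicative.toAdd g 0 = 0) →
      ∀ γi : ℕ → MulAut (Multiplicative (ℕ →₀ ZMod p)),
        (∀ i, 0 < i → (∀ z ∈ Z, γi i z = z) ∧ γi i (a 0) = a 0 * a i) →
      ∀ τ : MulAut (Multiplicative (ℕ →₀ ZMod p)),
        (∀ z ∈ Z, τ z = z) → τ (a 0) = a 0 ^ 2 →
      ∀ A : Subgroup (MulAut (Multiplicative (ℕ →₀ ZMod p))),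
        A = Subgroup.closure (insert τ { γ | ∃ i, 0 < i ∧ γ = γi i }) →
        (aCentralSeries A (normalizedByInn_of_comm A) 1 = Z ∧
          aHypercenter A (normalizedByInn_of_comm A) = Z ∧ Z.index = p) ∧
        (∀ K : Subgroup (Multiplicative (ℕ →₀ ZMod p)), K ≠ ⊤ →
          (∀ γ ∈ A, ∀ x ∈ K, γ x ∈ K) →
          aHypercenterFrom A (normalizedByInn_of_comm A) K inferInstance ≠ ⊤) ∧
        (∀ L : Subgroup (Multiplicative (ℕ →₀ ZMod p)), Finite L →
          (∀ γ ∈ A, ∀ x ∈ L, γ x ∈ L) →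
          aHypercenterFrom A (normalizedByInn_of_comm A) L inferInstance ≠ ⊤) := by
  have : Fact p.Prime := ⟨hp⟩
  intro a ha Z hZ γi hγi τ hτZ hτa A hA
  obtain rfl : a = basisGen p := funext ha
  obtain rfl : Z = (evalZero p).ker := Subgroup.ext fun g => (hZ g).trans mem_ker_evalZero.symm
  have hgen : insert τ { γ | ∃ i, 0 < i ∧ γ = γi i } ⊆ (A : Set _) := hA ▸ Subgroup.subset_closure
  have hτA : τ ∈ A := hgen (Set.mem_insert _ _)
  have hfix : ∀ φ ∈ A, ∀ z ∈ (evalZero p).ker, φ z = z := hA ▸ forall_mem_closure_fix <| by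
    rintro φ (rfl | ⟨i, hi, rfl⟩)
    exacts [hτZ, (hγi i hi).1]
  have hτ := eq_mul_pow_of_forall_ker_fix τ hτZ (hτa.trans (pow_two _))
  have hτker := mem_ker_evalZero_of_inv_mul_mem hτ
  have hshift : ∀ i, ∃ φ ∈ A, ∀ g, φ g = g * basisGen p i ^ (Multiplicative.toAdd g 0).val := by
    rintro (_ | i)
    · exact ⟨τ, hτA, hτ⟩
    · obtain ⟨hfix_i, hγ_i⟩ := hγi (i + 1) i.succ_pos
      exact ⟨γi (i + 1), hgen (Or.inr ⟨i + 1, i.succ_pos, rfl⟩),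
        eq_mul_pow_of_forall_ker_fix _ hfix_i hγ_i⟩
  have hZ1 : aCentralSeries A (normalizedByInn_of_comm A) 1 = (evalZero p).ker := by
    rw [aCentralSeries_one]
    exact le_antisymm (aStep_le hτA hτker _ bot_le) (le_aStep_of_forall_fix A hfix _ _)
  have hker_ne_top : (evalZero p).ker ≠ ⊤ := fun h =>
    hp.ne_one (index_ker_evalZero.symm.trans (Subgroup.index_eq_one.2 h))
  refine ⟨⟨hZ1, ?_, index_ker_evalZero⟩, fun K hK hinv => ?_, fun L _ hinv => ?_⟩
  · exact le_antisymm (aHypercenterFrom_le _ hτA hτker _ bot_le) (hZ1 ▸ le_iSup _ 1)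
  · exact aHypercenterFrom_ne_top _ hτA hτker hker_ne_top _
      (le_ker_evalZero_of_invariant hshift hinv hK)
  · exact aHypercenterFrom_ne_top _ hτA hτker hker_ne_top _
      (le_ker_evalZero_of_invariant hshift hinv L.ne_top_of_finite)

/-- **Example (Section 3).** Let `p` be an odd prime, `G = ⨁_{i<ω} ⟨a_i⟩` an elementary
abelian `p`-group (written multiplicatively as `Multiplicative (ℕ →₀ ZMod p)` with
`a i = ofAdd (single i 1)`), and `Z = ⨁_{0<i<ω} ⟨a_i⟩`.  For `i > 0` let `γ_i ∈ Aut(G)` fix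
`Z` pointwise with `a_0 ↦ a_0 a_i`, let `τ ∈ Aut(G)` fix `Z` pointwise with `a_0 ↦ a_0²`,
and let `A = ⟨τ, γ_i (i > 0)⟩`.  Then `Z = Z_1(G,A) = Z_∞(G,A)` has index `p` in `G`, while
for every proper `A`-invariant subgroup `K` of `G` — in particular for every finite
`A`-invariant subgroup `L` — the quotient `G/K` is not `A`-hypercentral. -/
theorem example_proper_invariant_quotient_not_hypercentral
    (p : ℕ) (hp : p.Prime) (hodd : Odd p) :
    ∀ (a : ℕ → Multiplicative (ℕ →₀ ZMod p)),
      (∀ i, a i = Multiplicative.ofAdd (Finsupp.single i 1)) →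
      ∀ Z : Subgroup (Multiplicative (ℕ →₀ ZMod p)),
        (∀ g, g ∈ Z ↔ Multiplicative.toAdd g 0 = 0) →
      ∀ γi : ℕ → MulAut (Multiplicative (ℕ →₀ ZMod p)),
        (∀ i, 0 < i → (∀ z ∈ Z, γi i z = z) ∧ γi i (a 0) = a 0 * a i) →
      ∀ τ : MulAut (Multiplicative (ℕ →₀ ZMod p)),
        (∀ z ∈ Z, τ z = z) → τ (a 0) = a 0 ^ 2 →
      ∀ A : Subgroup (MulAut (Multiplicative (ℕ →₀ ZMod p))),
        A = Subgroup.closure (insert τ { γ | ∃ i, 0 < i ∧ γ = γi i }) →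
        (aCentralSeries A (normalizedByInn_of_comm A) 1 = Z ∧
          aHypercenter A (normalizedByInn_of_comm A) = Z ∧ Z.index = p) ∧
        (∀ K : Subgroup (Multiplicative (ℕ →₀ ZMod p)), K ≠ ⊤ →
          (∀ γ ∈ A, ∀ x ∈ K, γ x ∈ K) →
          aHypercenterFrom A (normalizedByInn_of_comm A) K inferInstance ≠ ⊤) ∧
        (∀ L : Subgroup (Multiplicative (ℕ →₀ ZMod p)), Finite L →
          (∀ γ ∈ A, ∀ x ∈ L, γ x ∈ L) →
          aHypercenterFrom A (normalizedByInn_of_comm A) L inferInstance ≠ ⊤) :=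
  example_proper_invariant_quotient_not_hypercentral_general p hp
end
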